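/- arXiv:math/0610404 — 6 statements merged into one kernel-verified Lean document; each statement's English description precedes it below -/
import Mathlib

section
/- For each pair (i,j) with 0 ≤ i ≤ r−1 and 0 ≤ j ≤ q−1, let d(i,j) denote the residue of (1−q)·i − j + q modulo (q−1)·r, and for each residue d modulo (q−1)·r let L_d := span{m(i,j) : d(i,j) = d}. Then this is a grading of H over the integers modulo (q−1)·r: [L_d, L_{d'}] ⊆ L_{d+d'} for all residues d, d'. In particular m(1,0) and m(0,q−1) both have degree 1. -/
open scoped BigOperators

/-- Binomial coefficient of integers, zero unless `0 ≤ b ≤ a`. -/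
def intChoose (a b : ℤ) : ℤ :=
  if 0 ≤ b ∧ b ≤ a then (a.toNat.choose b.toNat : ℤ) else 0

/-- The structure constant `N(i,j,k,l)`. -/
def Ncoef (i j k l : ℤ) : ℤ :=
  intChoose (i + k - 1) i * intChoose (j + l - 1) (j - 1) -
    intChoose (i + k - 1) (i - 1) * intChoose (j + l - 1) j

variable (F : Type*) [Field F]

/-- The underlying space of `H(2;(n1,n2);Φ(1))`, with basis indexed by `Fin r × Fin q`. -/
abbrev Hsp (r q : ℕ) : Type _ := Fin r × Fin q → F

/-- The divided power monomial `x^(i) y^(j)`, read as `0` when out of range. -/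
noncomputable def mm (r q : ℕ) (i j : ℤ) : Hsp F r q :=
  if h : 0 ≤ i ∧ i < (r : ℤ) ∧ 0 ≤ j ∧ j < (q : ℤ) then
    Pi.single (⟨i.toNat, by omega⟩, ⟨j.toNat, by omega⟩) 1
  else 0

/-- The bracket on basis elements of `H(2;(n1,n2);Φ(1))`. -/
noncomputable def bB (r q : ℕ) (a b : Fin r × Fin q) : Hsp F r q :=
  if 0 < (a.1 : ℤ) + (b.1 : ℤ) then
    ((Ncoef (a.1 : ℤ) (a.2 : ℤ) (b.1 : ℤ) (b.2 : ℤ) : ℤ) : F) •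
      mm F r q ((a.1 : ℤ) + (b.1 : ℤ) - 1) ((a.2 : ℤ) + (b.2 : ℤ) - 1)
  else
    ((intChoose ((a.2 : ℤ) + (b.2 : ℤ) - 1) (b.2 : ℤ) -
        intChoose ((a.2 : ℤ) + (b.2 : ℤ) - 1) (a.2 : ℤ) : ℤ) : F) •
      mm F r q ((r : ℤ) - 1) ((a.2 : ℤ) + (b.2 : ℤ) - 1)

/-- The bilinear bracket of `H(2;(n1,n2);Φ(1))`, extending `bB` bilinearly. -/
noncomputable def br (r q : ℕ) (u v : Hsp F r q) : Hsp F r q :=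
  ∑ a : Fin r × Fin q, ∑ b : Fin r × Fin q, (u a * v b) • bB F r q a b

/-- The span of the monomials of degree `d` modulo `(q-1)*r`, where the monomial
`m(i,j)` has degree `(1-q)*i - j + q`. -/
noncomputable def Ld (r q : ℕ) (d : ZMod ((q - 1) * r)) : Submodule F (Hsp F r q) :=
  Submodule.span F {x | ∃ i j : ℤ, 0 ≤ i ∧ i < (r : ℤ) ∧ 0 ≤ j ∧ j < (q : ℤ) ∧
    (((1 - (q : ℤ)) * i - j + (q : ℤ) : ℤ) : ZMod ((q - 1) * r)) = d ∧ x = mm F r q i j}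

lemma mm_mem_Ld (r q : ℕ) (i j : ℤ) (d : ZMod ((q - 1) * r))
    (hd : (((1 - (q : ℤ)) * i - j + (q : ℤ) : ℤ) : ZMod ((q - 1) * r)) = d) :
    mm F r q i j ∈ Ld F r q d := by
  by_cases h : 0 ≤ i ∧ i < (r : ℤ) ∧ 0 ≤ j ∧ j < (q : ℤ)
  · exact Submodule.subset_span ⟨i, j, h.1, h.2.1, h.2.2.1, h.2.2.2, hd, rfl⟩
  · rw [mm, dif_neg h]; exact Submodule.zero_mem _

lemma br_add_left (r q : ℕ) (u u' v : Hsp F r q) :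
    br F r q (u + u') v = br F r q u v + br F r q u' v := by
  simp [br, add_mul, add_smul, Finset.sum_add_distrib]

lemma br_add_right (r q : ℕ) (u v v' : Hsp F r q) :
    br F r q u (v + v') = br F r q u v + br F r q u v' := by
  simp [br, mul_add, add_smul, Finset.sum_add_distrib]

lemma br_smul_left (r q : ℕ) (c : F) (u v : Hsp F r q) :
    br F r q (c • u) v = c • br F r q u v := by
  simp [br, Finset.smul_sum, smul_smul, mul_assoc]

lemma br_smul_right (r q : ℕ) (c : F) (u v : Hsp F r q) :
    br F r q u (c • v) = c • br F r q u v := by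
  simp only [br, Finset.smul_sum, smul_smul, Pi.smul_apply, smul_eq_mul]
  congr 1; funext a; congr 1; funext b; ring_nf

lemma br_zero_left (r q : ℕ) (v : Hsp F r q) : br F r q 0 v = 0 := by
  simp [br]

lemma br_zero_right (r q : ℕ) (u : Hsp F r q) : br F r q u 0 = 0 := by
  simp [br]

lemma br_single (r q : ℕ) (a b : Fin r × Fin q) :
    br F r q (Pi.single a 1) (Pi.single b 1) = bB F r q a b := by
  rw [br]
  rw [Finset.sum_eq_single a]
  · rw [Finset.sum_eq_single b]
    · simp
    · intro b' _ hb'; simp [Pi.single_apply, hb']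
    · simp
  · intro a' _ ha'
    apply Finset.sum_eq_zero
    intro b' _
    simp [Pi.single_apply, ha']
  · simp

lemma bB_mem (r q : ℕ) (hq : 1 ≤ q) (a b : Fin r × Fin q) :
    bB F r q a b ∈ Ld F r q
      ((((1 - (q : ℤ)) * (a.1 : ℤ) - (a.2 : ℤ) + (q : ℤ) : ℤ) : ZMod ((q - 1) * r)) +
       (((1 - (q : ℤ)) * (b.1 : ℤ) - (b.2 : ℤ) + (q : ℤ) : ℤ) : ZMod ((q - 1) * r))) := by
  have hmod : ((((q : ℤ) - 1) * (r : ℤ) : ℤ) : ZMod ((q - 1) * r)) = 0 := by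
    have : (((q : ℤ) - 1) * (r : ℤ) : ℤ) = (((q - 1) * r : ℕ) : ℤ) := by
      push_cast [hq]; ring
    rw [this, Int.cast_natCast, ZMod.natCast_self]
  rw [bB]
  split_ifs with h
  · apply Submodule.smul_mem
    apply mm_mem_Ld
    rw [← Int.cast_add]
    congr 1
    ring
  · have ha : (a.1 : ℤ) = 0 := by have := a.1.2; omega
    have hb : (b.1 : ℤ) = 0 := by have := b.1.2; omega
    apply Submodule.smul_mem
    apply mm_mem_Ld
    rw [ha, hb, ← Int.cast_add]
    have : ((1 - (q : ℤ)) * ((r : ℤ) - 1) - ((a.2 : ℤ) + (b.2 : ℤ) - 1) + (q : ℤ) : ℤ)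
        = (((1 - (q : ℤ)) * 0 - (a.2 : ℤ) + (q : ℤ)) + ((1 - (q : ℤ)) * 0 - (b.2 : ℤ) + (q : ℤ)))
          + (-1) * (((q : ℤ) - 1) * (r : ℤ)) := by ring
    rw [this, Int.cast_add, Int.cast_mul, hmod]
    simp

theorem stmt1 (p : ℕ) (hp : p.Prime) (F : Type*) [Field F] [CharP F p]
    (n1 n2 : ℕ) (hn1 : 0 < n1) (hn2 : 0 < n2) :
    (∀ d d' : ZMod ((p ^ n2 - 1) * p ^ n1),
      ∀ u ∈ Ld F (p ^ n1) (p ^ n2) d, ∀ v ∈ Ld F (p ^ n1) (p ^ n2) d',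
        br F (p ^ n1) (p ^ n2) u v ∈ Ld F (p ^ n1) (p ^ n2) (d + d')) ∧
    mm F (p ^ n1) (p ^ n2) 1 0 ∈ Ld F (p ^ n1) (p ^ n2) 1 ∧
    mm F (p ^ n1) (p ^ n2) 0 ((p ^ n2 : ℤ) - 1) ∈ Ld F (p ^ n1) (p ^ n2) 1 := by
  have hp2 := hp.two_le
  set r := p ^ n1 with hrdef
  set q := p ^ n2 with hqdef
  have hr : 2 ≤ r := by
    calc 2 ≤ p := hp2
    _ ≤ p ^ n1 := Nat.le_self_pow hn1.ne' p
  have hq : 2 ≤ q := by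
    calc 2 ≤ p := hp2
    _ ≤ p ^ n2 := Nat.le_self_pow hn2.ne' p
  refine ⟨?_, ?_, ?_⟩
  · intro d d' u hu v hv
    induction hu using Submodule.span_induction with
    | mem x hx =>
      obtain ⟨i, j, hi0, hir, hj0, hjq, hdeg, rfl⟩ := hx
      induction hv using Submodule.span_induction with
      | mem y hy =>
        obtain ⟨k, l, hk0, hkr, hl0, hlq, hdeg', rfl⟩ := hy
        have hx' : mm F r q i j = Pi.single ((⟨i.toNat, by omega⟩, ⟨j.toNat, by omega⟩) : Fin r × Fin q) 1 := by
          rw [mm, dif_pos ⟨hi0, hir, hj0, hjq⟩]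
        have hy' : mm F r q k l = Pi.single ((⟨k.toNat, by omega⟩, ⟨l.toNat, by omega⟩) : Fin r × Fin q) 1 := by
          rw [mm, dif_pos ⟨hk0, hkr, hl0, hlq⟩]
        rw [hx', hy', br_single]
        have := bB_mem F r q (by omega)
          ((⟨i.toNat, by omega⟩, ⟨j.toNat, by omega⟩) : Fin r × Fin q)
          ((⟨k.toNat, by omega⟩, ⟨l.toNat, by omega⟩) : Fin r × Fin q)
        simp only [Fin.val_mk] at this
        have e1 : ((1 - (q : ℤ)) * (i.toNat : ℤ) - (j.toNat : ℤ) + (q : ℤ) : ℤ)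
            = (1 - (q : ℤ)) * i - j + (q : ℤ) := by
          rw [Int.toNat_of_nonneg hi0, Int.toNat_of_nonneg hj0]
        have e2 : ((1 - (q : ℤ)) * (k.toNat : ℤ) - (l.toNat : ℤ) + (q : ℤ) : ℤ)
            = (1 - (q : ℤ)) * k - l + (q : ℤ) := by
          rw [Int.toNat_of_nonneg hk0, Int.toNat_of_nonneg hl0]
        rw [e1, e2, hdeg, hdeg'] at this
        exact this
      | zero => rw [br_zero_right]; exact Submodule.zero_mem _
      | add y z _ _ ihy ihz =>
        rw [br_add_right]; exact Submodule.add_mem _ ihy ihz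
      | smul c y _ ihy =>
        rw [br_smul_right]; exact Submodule.smul_mem _ c ihy
    | zero => rw [br_zero_left]; exact Submodule.zero_mem _
    | add x y _ _ ihx ihy =>
      rw [br_add_left]; exact Submodule.add_mem _ ihx ihy
    | smul c x _ ihx =>
      rw [br_smul_left]; exact Submodule.smul_mem _ c ihx
  · apply mm_mem_Ld
    have h1 : ((1 - (q : ℤ)) * 1 - 0 + (q : ℤ) : ℤ) = 1 := by ring
    rw [h1, Int.cast_one]
  · apply mm_mem_Ld
    have h1 : ((1 - (q : ℤ)) * 0 - ((p : ℤ) ^ n2 - 1) + (q : ℤ) : ℤ) = 1 := by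
      rw [hqdef]; push_cast; ring
    rw [h1, Int.cast_one]
end

section
/- Assume p is odd, and set X := m(1,0) and Y := m(0,q−1). For 0 ≤ i ≤ r−1 let V := m(i,1). Then (using left-normed brackets): [V,X,X] = 0 and [V,Y,Y] = 0; moreover [V,X,Y] ≠ 0; if i ≥ 1 then [V,X,Y] + [V,Y,X] = 0 (so the corresponding diamond of the loop algebra has type ∞), while if i = 0 then 2·[V,X,Y] + [V,Y,X] = 0 (so the corresponding diamond has type −1). -/
open scoped BigOperators

variable (F : Type*) [Field F]

lemma intChoose_self {a : ℤ} (h : 0 ≤ a) : intChoose a a = 1 := by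
  rw [intChoose, if_pos ⟨h, le_refl a⟩]; simp

lemma intChoose_zero {a : ℤ} (h : 0 ≤ a) : intChoose a 0 = 1 := by
  rw [intChoose, if_pos ⟨le_refl 0, h⟩]; simp

lemma intChoose_of_lt {a b : ℤ} (h : a < b) : intChoose a b = 0 := by
  rw [intChoose, if_neg (by omega)]

lemma intChoose_of_neg {a b : ℤ} (h : b < 0) : intChoose a b = 0 := by
  rw [intChoose, if_neg (by omega)]

lemma intChoose_one {a : ℤ} (h : 1 ≤ a) : intChoose a 1 = a := by
  rw [intChoose, if_pos ⟨by norm_num, h⟩]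
  simp [Nat.choose_one_right]; omega

lemma mm_out (r q : ℕ) {i j : ℤ}
    (h : ¬ (0 ≤ i ∧ i < (r : ℤ) ∧ 0 ≤ j ∧ j < (q : ℤ))) : mm F r q i j = 0 := by
  rw [mm, dif_neg h]

lemma br_mm (r q : ℕ) (i j k l : ℤ)
    (hi : 0 ≤ i) (hir : i < (r : ℤ)) (hj : 0 ≤ j) (hjq : j < (q : ℤ))
    (hk : 0 ≤ k) (hkr : k < (r : ℤ)) (hl : 0 ≤ l) (hlq : l < (q : ℤ)) :
    br F r q (mm F r q i j) (mm F r q k l) =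
      if 0 < i + k then
        ((Ncoef i j k l : ℤ) : F) • mm F r q (i + k - 1) (j + l - 1)
      else ((intChoose (j + l - 1) l - intChoose (j + l - 1) j : ℤ) : F) •
        mm F r q ((r : ℤ) - 1) (j + l - 1) := by
  rw [mm, dif_pos ⟨hi, hir, hj, hjq⟩, mm, dif_pos ⟨hk, hkr, hl, hlq⟩, br_single]
  unfold bB
  simp [Int.toNat_of_nonneg, hi, hj, hk, hl]
lemma Ncoef_i110 {i : ℤ} (hi : 0 ≤ i) : Ncoef i 1 1 0 = 1 := by
  have h1 : intChoose (i + 1 - 1) i = 1 := by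
    rw [show i + 1 - 1 = i from by ring]; exact intChoose_self hi
  have h2 : intChoose (1 + 0 - 1) (1 - 1) = 1 := by
    norm_num; exact intChoose_zero le_rfl
  have h3 : intChoose (1 + 0 - 1) 1 = 0 := by
    norm_num; exact intChoose_of_lt (by norm_num)
  rw [Ncoef, h1, h2, h3]; ring

lemma Ncoef_i010 {i : ℤ} (hi : 0 ≤ i) : Ncoef i 0 1 0 = 0 := by
  have h1 : intChoose (0 + 0 - 1) (0 - 1) = 0 := intChoose_of_neg (by norm_num)
  have h3 : intChoose (0 + 0 - 1) 0 = 0 := intChoose_of_lt (by norm_num)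
  rw [Ncoef, h1, h3]; ring

lemma Ncoef_i10q {i q : ℤ} (hi : 1 ≤ i) (hq : 2 ≤ q) :
    Ncoef i 1 0 (q - 1) = -(q - 1) := by
  have h1 : intChoose (i + 0 - 1) i = 0 := intChoose_of_lt (by omega)
  have h2 : intChoose (i + 0 - 1) (i - 1) = 1 := by
    rw [show i + 0 - 1 = i - 1 from by ring]; exact intChoose_self (by omega)
  have h3 : intChoose (1 + (q - 1) - 1) 1 = q - 1 := by
    rw [show 1 + (q - 1) - 1 = q - 1 from by ring]; exact intChoose_one (by omega)
  rw [Ncoef, h1, h2, h3]; ring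

lemma Ncoef_i00q {i q : ℤ} (hi : 1 ≤ i) (hq : 2 ≤ q) :
    Ncoef i 0 0 (q - 1) = -1 := by
  have h1 : intChoose (0 + (q - 1) - 1) (0 - 1) = 0 := intChoose_of_neg (by norm_num)
  have h2 : intChoose (i + 0 - 1) (i - 1) = 1 := by
    rw [show i + 0 - 1 = i - 1 from by ring]; exact intChoose_self (by omega)
  have h3 : intChoose (0 + (q - 1) - 1) 0 = 1 := intChoose_zero (by omega)
  rw [Ncoef, h1, h2, h3]; ring

lemma Ncoef_aq10 {a q : ℤ} (ha : 0 ≤ a) (hq : 2 ≤ q) :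
    Ncoef a (q - 1) 1 0 = 1 := by
  have h1 : intChoose (a + 1 - 1) a = 1 := by
    rw [show a + 1 - 1 = a from by ring]; exact intChoose_self ha
  have h2 : intChoose (q - 1 + 0 - 1) (q - 1 - 1) = 1 := by
    rw [show q - 1 + 0 - 1 = q - 1 - 1 from by ring]; exact intChoose_self (by omega)
  have h3 : intChoose (q - 1 + 0 - 1) (q - 1) = 0 := intChoose_of_lt (by omega)
  rw [Ncoef, h1, h2, h3]; ring

lemma cVY0 {q : ℤ} (hq : 2 ≤ q) :
    intChoose (1 + (q - 1) - 1) (q - 1) - intChoose (1 + (q - 1) - 1) 1 = 2 - q := by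
  have h1 : intChoose (1 + (q - 1) - 1) (q - 1) = 1 := by
    rw [show 1 + (q - 1) - 1 = q - 1 from by ring]; exact intChoose_self (by omega)
  have h2 : intChoose (1 + (q - 1) - 1) 1 = q - 1 := by
    rw [show 1 + (q - 1) - 1 = q - 1 from by ring]; exact intChoose_one (by omega)
  rw [h1, h2]; ring

lemma cVXY0 {q : ℤ} (hq : 2 ≤ q) :
    intChoose (0 + (q - 1) - 1) (q - 1) - intChoose (0 + (q - 1) - 1) 0 = -1 := by
  have h1 : intChoose (0 + (q - 1) - 1) (q - 1) = 0 := intChoose_of_lt (by omega)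
  have h3 : intChoose (0 + (q - 1) - 1) 0 = 1 := intChoose_zero (by omega)
  rw [h1, h3]; ring

lemma smul_mm_ne (r q : ℕ) (c : F) (hc : c ≠ 0) {a b : ℤ}
    (h : 0 ≤ a ∧ a < (r : ℤ) ∧ 0 ≤ b ∧ b < (q : ℤ)) :
    c • mm F r q a b ≠ 0 := by
  rw [mm, dif_pos h]
  intro hE
  apply hc
  have := congrFun hE (⟨a.toNat, by omega⟩, ⟨b.toNat, by omega⟩)
  simpa [Pi.single_eq_same] using this
theorem stmt4 (p : ℕ) (hp : p.Prime) (hodd : p ≠ 2) (F : Type*) [Field F] [CharP F p]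
    (n1 n2 : ℕ) (hn1 : 0 < n1) (hn2 : 0 < n2)
    (X Y : Hsp F (p ^ n1) (p ^ n2))
    (hX : X = mm F (p ^ n1) (p ^ n2) 1 0)
    (hY : Y = mm F (p ^ n1) (p ^ n2) 0 ((p ^ n2 : ℤ) - 1))
    (i : ℤ) (hi0 : 0 ≤ i) (hir : i ≤ (p ^ n1 : ℤ) - 1)
    (V : Hsp F (p ^ n1) (p ^ n2)) (hV : V = mm F (p ^ n1) (p ^ n2) i 1) :
    br F (p ^ n1) (p ^ n2) (br F (p ^ n1) (p ^ n2) V X) X = 0 ∧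
    br F (p ^ n1) (p ^ n2) (br F (p ^ n1) (p ^ n2) V Y) Y = 0 ∧
    br F (p ^ n1) (p ^ n2) (br F (p ^ n1) (p ^ n2) V X) Y ≠ 0 ∧
    (1 ≤ i →
      br F (p ^ n1) (p ^ n2) (br F (p ^ n1) (p ^ n2) V X) Y +
        br F (p ^ n1) (p ^ n2) (br F (p ^ n1) (p ^ n2) V Y) X = 0) ∧
    (i = 0 →
      (2 : F) • br F (p ^ n1) (p ^ n2) (br F (p ^ n1) (p ^ n2) V X) Y +
        br F (p ^ n1) (p ^ n2) (br F (p ^ n1) (p ^ n2) V Y) X = 0) := by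
  have hp3 : 3 ≤ p := by have := hp.two_le; omega
  have hr3 : (3 : ℤ) ≤ ((p ^ n1 : ℕ) : ℤ) := by
    exact_mod_cast le_trans hp3 (Nat.le_self_pow hn1.ne' p)
  have hq3 : (3 : ℤ) ≤ ((p ^ n2 : ℕ) : ℤ) := by
    exact_mod_cast le_trans hp3 (Nat.le_self_pow hn2.ne' p)
  have hr3' : (3 : ℤ) ≤ (p : ℤ) ^ n1 := by push_cast at hr3; exact hr3
  have hq3' : (3 : ℤ) ≤ (p : ℤ) ^ n2 := by push_cast at hq3; exact hq3
  have hir' : i < ((p ^ n1 : ℕ) : ℤ) := by push_cast; omega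
  have hqF : ((p ^ n2 : ℕ) : F) = 0 :=
    (CharP.cast_eq_zero_iff F p _).mpr (dvd_pow_self p hn2.ne')
  have hqF' : ((p : F)) ^ n2 = 0 := by push_cast at hqF; exact hqF
  -- [V,X] = m(i,0)
  have hVX : br F (p ^ n1) (p ^ n2) V X = mm F (p ^ n1) (p ^ n2) i 0 := by
    rw [hV, hX, br_mm F (p ^ n1) (p ^ n2) i 1 1 0 hi0 hir' (by norm_num) (by omega)
        (by norm_num) (by omega) le_rfl (by omega),
      if_pos (show (0 : ℤ) < i + 1 by omega), Ncoef_i110 hi0,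
      show i + 1 - 1 = i from by ring, show (1 : ℤ) + 0 - 1 = 0 from by ring]
    simp
  -- [V,X,X] = 0
  have goal1 : br F (p ^ n1) (p ^ n2) (br F (p ^ n1) (p ^ n2) V X) X = 0 := by
    rw [hVX, hX, br_mm F (p ^ n1) (p ^ n2) i 0 1 0 hi0 hir' le_rfl (by omega)
        (by norm_num) (by omega) le_rfl (by omega),
      if_pos (show (0 : ℤ) < i + 1 by omega), Ncoef_i010 hi0]
    simp
  by_cases hc : 1 ≤ i
  · -- case i ≥ 1
    have hVXY : br F (p ^ n1) (p ^ n2) (br F (p ^ n1) (p ^ n2) V X) Y =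
        (-1 : F) • mm F (p ^ n1) (p ^ n2) (i - 1) ((p : ℤ) ^ n2 - 2) := by
      rw [hVX, hY, br_mm F (p ^ n1) (p ^ n2) i 0 0 ((p : ℤ) ^ n2 - 1) hi0 hir' le_rfl
          (by omega) le_rfl (by omega) (by omega) (by push_cast; omega),
        if_pos (show (0 : ℤ) < i + 0 by omega), Ncoef_i00q hc (by omega),
        show i + 0 - 1 = i - 1 from by ring,
        show 0 + ((p : ℤ) ^ n2 - 1) - 1 = (p : ℤ) ^ n2 - 2 from by ring]
      norm_num
    have hVY : br F (p ^ n1) (p ^ n2) V Y =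
        mm F (p ^ n1) (p ^ n2) (i - 1) ((p : ℤ) ^ n2 - 1) := by
      rw [hV, hY, br_mm F (p ^ n1) (p ^ n2) i 1 0 ((p : ℤ) ^ n2 - 1) hi0 hir'
          (by norm_num) (by omega) le_rfl (by omega) (by omega) (by push_cast; omega),
        if_pos (show (0 : ℤ) < i + 0 by omega), Ncoef_i10q hc (by omega),
        show i + 0 - 1 = i - 1 from by ring,
        show 1 + ((p : ℤ) ^ n2 - 1) - 1 = (p : ℤ) ^ n2 - 1 from by ring]
      push_cast
      rw [hqF']
      norm_num
    have goal2 : br F (p ^ n1) (p ^ n2) (br F (p ^ n1) (p ^ n2) V Y) Y = 0 := by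
      rw [hVY, hY, br_mm F (p ^ n1) (p ^ n2) (i - 1) ((p : ℤ) ^ n2 - 1) 0
          ((p : ℤ) ^ n2 - 1) (by omega) (by omega) (by omega) (by push_cast; omega)
          le_rfl (by omega) (by omega) (by push_cast; omega)]
      have hz1 : mm F (p ^ n1) (p ^ n2) (i - 1 + 0 - 1)
          (((p : ℤ) ^ n2 - 1) + ((p : ℤ) ^ n2 - 1) - 1) = 0 :=
        mm_out F _ _ (by push_cast; omega)
      have hz2 : mm F (p ^ n1) (p ^ n2) (((p ^ n1 : ℕ) : ℤ) - 1)
          (((p : ℤ) ^ n2 - 1) + ((p : ℤ) ^ n2 - 1) - 1) = 0 :=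
        mm_out F _ _ (by push_cast; omega)
      rw [hz1, hz2]
      simp
    have goal3 : br F (p ^ n1) (p ^ n2) (br F (p ^ n1) (p ^ n2) V X) Y ≠ 0 := by
      rw [hVXY]
      exact smul_mm_ne F _ _ (-1) (by norm_num) ⟨by omega, by push_cast; omega,
        by omega, by push_cast; omega⟩
    have hVYX : br F (p ^ n1) (p ^ n2) (br F (p ^ n1) (p ^ n2) V Y) X =
        mm F (p ^ n1) (p ^ n2) (i - 1) ((p : ℤ) ^ n2 - 2) := by
      rw [hVY, hX, br_mm F (p ^ n1) (p ^ n2) (i - 1) ((p : ℤ) ^ n2 - 1) 1 0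
          (by omega) (by omega) (by omega) (by push_cast; omega)
          (by norm_num) (by omega) le_rfl (by omega),
        if_pos (show (0 : ℤ) < i - 1 + 1 by omega), Ncoef_aq10 (by omega) (by omega),
        show i - 1 + 1 - 1 = i - 1 from by ring,
        show (p : ℤ) ^ n2 - 1 + 0 - 1 = (p : ℤ) ^ n2 - 2 from by ring]
      simp
    refine ⟨goal1, goal2, goal3, fun _ => ?_, fun h0 => absurd h0 (by omega)⟩
    rw [hVXY, hVYX, neg_smul, one_smul, neg_add_cancel]
  · -- case i = 0
    have hi' : i = 0 := by omega
    subst hi'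
    have hVXY : br F (p ^ n1) (p ^ n2) (br F (p ^ n1) (p ^ n2) V X) Y =
        (-1 : F) • mm F (p ^ n1) (p ^ n2) (((p ^ n1 : ℕ) : ℤ) - 1) ((p : ℤ) ^ n2 - 2) := by
      rw [hVX, hY, br_mm F (p ^ n1) (p ^ n2) 0 0 0 ((p : ℤ) ^ n2 - 1) le_rfl (by omega)
          le_rfl (by omega) le_rfl (by omega) (by omega) (by push_cast; omega),
        if_neg (by norm_num : ¬ (0 : ℤ) < 0 + 0), cVXY0 (show (2:ℤ) ≤ (p : ℤ) ^ n2 by omega),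
        show 0 + ((p : ℤ) ^ n2 - 1) - 1 = (p : ℤ) ^ n2 - 2 from by ring]
      norm_num
    have hVY : br F (p ^ n1) (p ^ n2) V Y =
        ((2 - (p : ℤ) ^ n2 : ℤ) : F) •
          mm F (p ^ n1) (p ^ n2) (((p ^ n1 : ℕ) : ℤ) - 1) ((p : ℤ) ^ n2 - 1) := by
      rw [hV, hY, br_mm F (p ^ n1) (p ^ n2) 0 1 0 ((p : ℤ) ^ n2 - 1) le_rfl (by omega)
          (by norm_num) (by omega) le_rfl (by omega) (by omega) (by push_cast; omega),
        if_neg (by norm_num : ¬ (0 : ℤ) < 0 + 0), cVY0 (show (2:ℤ) ≤ (p : ℤ) ^ n2 by omega),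
        show 1 + ((p : ℤ) ^ n2 - 1) - 1 = (p : ℤ) ^ n2 - 1 from by ring]
    have goal2 : br F (p ^ n1) (p ^ n2) (br F (p ^ n1) (p ^ n2) V Y) Y = 0 := by
      rw [hVY, br_smul_left, hY, br_mm F (p ^ n1) (p ^ n2) (((p ^ n1 : ℕ) : ℤ) - 1)
          ((p : ℤ) ^ n2 - 1) 0 ((p : ℤ) ^ n2 - 1) (by omega) (by omega) (by omega)
          (by push_cast; omega) le_rfl (by omega) (by omega) (by push_cast; omega),
        if_pos (show (0 : ℤ) < ((p ^ n1 : ℕ) : ℤ) - 1 + 0 by omega)]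
      rw [mm_out F _ _ (by push_cast; omega)]
      simp
    have goal3 : br F (p ^ n1) (p ^ n2) (br F (p ^ n1) (p ^ n2) V X) Y ≠ 0 := by
      rw [hVXY]
      exact smul_mm_ne F _ _ (-1) (by norm_num) ⟨by omega, by omega,
        by omega, by push_cast; omega⟩
    have hVYX : br F (p ^ n1) (p ^ n2) (br F (p ^ n1) (p ^ n2) V Y) X =
        ((2 - (p : ℤ) ^ n2 : ℤ) : F) •
          mm F (p ^ n1) (p ^ n2) (((p ^ n1 : ℕ) : ℤ) - 1) ((p : ℤ) ^ n2 - 2) := by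
      rw [hVY, br_smul_left, hX, br_mm F (p ^ n1) (p ^ n2) (((p ^ n1 : ℕ) : ℤ) - 1)
          ((p : ℤ) ^ n2 - 1) 1 0 (by omega) (by omega) (by omega) (by push_cast; omega)
          (by norm_num) (by omega) le_rfl (by omega),
        if_pos (show (0 : ℤ) < ((p ^ n1 : ℕ) : ℤ) - 1 + 1 by omega),
        Ncoef_aq10 (by omega) (by omega),
        show ((p ^ n1 : ℕ) : ℤ) - 1 + 1 - 1 = ((p ^ n1 : ℕ) : ℤ) - 1 from by ring,
        show (p : ℤ) ^ n2 - 1 + 0 - 1 = (p : ℤ) ^ n2 - 2 from by ring]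
      simp
    refine ⟨goal1, goal2, goal3, fun h1 => absurd h1 (by omega), fun _ => ?_⟩
    rw [hVXY, hVYX, smul_smul]
    have hcoef : ((2 - (p : ℤ) ^ n2 : ℤ) : F) = 2 := by push_cast; rw [hqF']; ring
    rw [hcoef, ← add_smul]
    norm_num
end

section
/- Let F be a perfect field of characteristic p > 0 and let μ ∈ F satisfy μ^p ≠ μ. Then μ+1 ≠ 0 and μ^p+1 ≠ 0, and there exists exactly one pair (σ, ρ) ∈ F × F such that σ^p·((μ^p+1)^{−1} − (μ+1)^{−1}) = 1 and ρ·(μ+1) = σ. For this pair, σ ≠ 0, ρ ≠ 0, ρ^p − σ^{p−1}·ρ − 1 = 0, and −1 + σ/ρ = μ. -/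
/-- determination of the parameters `σ`, `ρ` from a prescribed diamond
type `μ` outside the prime field, over a perfect field of characteristic `p`. -/
theorem stmt10 (p : ℕ) (hp : p.Prime) (F : Type*) [Field F] [CharP F p]
    (hperf : Function.Surjective fun x : F => x ^ p)
    (μ : F) (hμ : μ ^ p ≠ μ) :
    μ + 1 ≠ 0 ∧ μ ^ p + 1 ≠ 0 ∧
    (∃! sr : F × F,
      sr.1 ^ p * ((μ ^ p + 1)⁻¹ - (μ + 1)⁻¹) = 1 ∧ sr.2 * (μ + 1) = sr.1) ∧
    (∀ σ ρ : F, σ ^ p * ((μ ^ p + 1)⁻¹ - (μ + 1)⁻¹) = 1 → ρ * (μ + 1) = σ →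
      σ ≠ 0 ∧ ρ ≠ 0 ∧ ρ ^ p - σ ^ (p - 1) * ρ - 1 = 0 ∧ -1 + σ / ρ = μ) := by
  haveI : Fact p.Prime := ⟨hp⟩
  have hp1 : 1 ≤ p := hp.one_le
  have hneg : (-1 : F) ^ p = -1 := by
    have := map_neg (frobenius F p) 1
    simpa [frobenius_def] using this
  have hinj : Function.Injective (fun x : F => x ^ p) := by
    intro a b hab
    simp only at hab
    have h0 : (a - b) ^ p = 0 := by rw [sub_pow_char, hab, sub_self]
    have := pow_eq_zero_iff hp.ne_zero |>.mp h0
    exact sub_eq_zero.mp this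
  have h1 : μ + 1 ≠ 0 := by
    intro h
    have hm : μ = -1 := by linear_combination h
    apply hμ; rw [hm, hneg]
  have h2 : μ ^ p + 1 ≠ 0 := by
    intro h
    have hm : μ ^ p = -1 := by linear_combination h
    have : μ = -1 := hinj (by simpa [hneg] using hm)
    apply hμ; rw [this, hneg]
  set c : F := (μ ^ p + 1)⁻¹ - (μ + 1)⁻¹ with hc
  have hcne : c ≠ 0 := by
    intro h
    have h' : (μ ^ p + 1)⁻¹ = (μ + 1)⁻¹ := sub_eq_zero.mp h
    have := inv_injective h'
    apply hμ; linear_combination this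
  refine ⟨h1, h2, ?_, ?_⟩
  · obtain ⟨σ, hσ⟩ := hperf c⁻¹
    simp only at hσ
    refine ⟨(σ, σ * (μ + 1)⁻¹), ⟨by rw [hσ]; exact inv_mul_cancel₀ hcne, by
      field_simp⟩, ?_⟩
    rintro ⟨σ', ρ'⟩ ⟨h3, h4⟩
    simp only at h3 h4
    have hσ' : σ' = σ := by
      apply hinj
      simp only
      rw [hσ]
      exact eq_inv_of_mul_eq_one_left (by linear_combination h3)
    have hρ'' : ρ' = σ * (μ + 1)⁻¹ := by
      rw [← hσ', ← h4]; field_simp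
    simp only [Prod.mk.injEq]; exact ⟨hσ', hρ''⟩
  · intro σ ρ h3 h4
    have hσne : σ ≠ 0 := by
      intro h; rw [h, zero_pow hp.ne_zero, zero_mul] at h3
      exact one_ne_zero h3.symm
    have hρne : ρ ≠ 0 := by
      intro h; rw [h, zero_mul] at h4; exact hσne h4.symm
    refine ⟨hσne, hρne, ?_, ?_⟩
    · have hρ' : ρ = σ * (μ + 1)⁻¹ := by rw [← h4]; field_simp
      have e1 : ρ ^ p = σ ^ p * (μ ^ p + 1)⁻¹ := by
        rw [hρ', mul_pow, inv_pow, add_pow_char, one_pow]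
      have e2 : σ ^ (p - 1) * σ = σ ^ p := by
        rw [← pow_succ]; congr 1; omega
      rw [e1, hρ']
      linear_combination h3 - (μ + 1)⁻¹ * e2
    · field_simp
      linear_combination -h4
end

section
/- Let F be a field of odd characteristic p and let q > 3 be a power of p. Let L = ⊕_{i≥1} L_i be a graded Lie algebra over F satisfying the covering property, with dim L_1 = 2, dim L_i = 1 for 2 ≤ i ≤ q−1, and let Y be a nonzero element of L_1 such that [u, Y] = 0 for every u ∈ L_i with 2 ≤ i ≤ q−2. Then for every X ∈ L_1 not proportional to Y, setting V := [Y, X, …, X] (left-normed, with q−2 copies of X): V spans L_{q−1}, [V,Y,Y] = 0, and [V,Y,X] = −2·[V,X,Y]. -/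
/-- in a graded Lie algebra with the covering property, second diamond in
degree `q` and `[L_i, Y] = 0` for `2 ≤ i ≤ q-2`, the element `V = [Y,X,…,X]` (with `q-2`
copies of `X`) spans `L_{q-1}` and satisfies `[V,Y,Y] = 0` and `[V,Y,X] = -2·[V,X,Y]`. -/
theorem stmt12 (p : ℕ) (hp : p.Prime) (hodd : p ≠ 2)
    (F : Type*) [Field F] [CharP F p]
    (m : ℕ) (q : ℕ) (hq : q = p ^ m) (hq3 : 3 < q)
    (L : Type*) [LieRing L] [LieAlgebra F L]
    (Lc : ℕ → Submodule F L)
    -- `L = ⊕_{i ≥ 1} L_i` is a graded Lie algebra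
    (hinternal : DirectSum.IsInternal Lc) (h0 : Lc 0 = ⊥)
    (hgr : ∀ i j : ℕ, ∀ x ∈ Lc i, ∀ y ∈ Lc j, ⁅x, y⁆ ∈ Lc (i + j))
    -- the covering property
    (hcov : ∀ i : ℕ, 1 ≤ i → ∀ u ∈ Lc i, u ≠ 0 →
      Submodule.span F {z | ∃ w ∈ Lc 1, z = ⁅u, w⁆} = Lc (i + 1))
    -- `dim L_1 = 2` and `dim L_i = 1` for `2 ≤ i ≤ q-1`
    (hdim1 : Module.finrank F (Lc 1) = 2)
    (hdim : ∀ i : ℕ, 2 ≤ i → i ≤ q - 1 → Module.finrank F (Lc i) = 1)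
    -- `Y` is a nonzero element of `L_1` centralizing `L_i` for `2 ≤ i ≤ q-2`
    (Y : L) (hY : Y ∈ Lc 1) (hY0 : Y ≠ 0)
    (hcent : ∀ i : ℕ, 2 ≤ i → i ≤ q - 2 → ∀ u ∈ Lc i, ⁅u, Y⁆ = 0) :
    ∀ X ∈ Lc 1, X ∉ Submodule.span F {Y} →
      Submodule.span F {(fun z => ⁅z, X⁆)^[q - 2] Y} = Lc (q - 1) ∧
      ⁅⁅(fun z => ⁅z, X⁆)^[q - 2] Y, Y⁆, Y⁆ = 0 ∧
      ⁅⁅(fun z => ⁅z, X⁆)^[q - 2] Y, Y⁆, X⁆ =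
        -((2 : F) • ⁅⁅(fun z => ⁅z, X⁆)^[q - 2] Y, X⁆, Y⁆) := by
  intro X hX hXs
  set V : ℕ → L := fun n => (fun z => ⁅z, X⁆)^[n] Y with hVdef
  have hV0 : V 0 = Y := rfl
  have hVsucc : ∀ n, V (n + 1) = ⁅V n, X⁆ := by
    intro n
    simp only [hVdef, Function.iterate_succ_apply']
  -- membership in graded pieces
  have hVmem : ∀ n, V n ∈ Lc (n + 1) := by
    intro n
    induction n with
    | zero => exact hY
    | succ n ih =>
      rw [hVsucc]
      exact hgr (n + 1) 1 _ ih X hX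
  -- Y kills V a for small a
  have hVY : ∀ a, a ≤ q - 3 → ⁅V a, Y⁆ = 0 := by
    intro a ha
    cases a with
    | zero => simpa [hV0] using lie_self Y
    | succ n => exact hcent (n + 2) (by omega) (by omega) _ (hVmem (n + 1))
  -- the Jacobi recurrence
  have hrec : ∀ a b, ⁅V a, V (b + 1)⁆ = ⁅⁅V a, V b⁆, X⁆ - ⁅V (a + 1), V b⁆ := by
    intro a b
    rw [hVsucc b, leibniz_lie, ← hVsucc a, ← lie_skew (V (a + 1)) (V b)]
    abel
  -- brackets of small total degree vanish
  have hzero : ∀ b a, a + b ≤ q - 3 → ⁅V a, V b⁆ = 0 := by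
    intro b
    induction b with
    | zero => intro a h; exact hVY a (by omega)
    | succ b ih =>
      intro a h
      rw [hrec, ih a (by omega), ih (a + 1) (by omega), zero_lie, sub_zero]
  -- sum q-2
  have hsum2 : ∀ b, b ≤ q - 2 →
      ⁅V (q - 2 - b), V b⁆ = ((-1 : F) ^ b) • ⁅V (q - 2), Y⁆ := by
    intro b
    induction b with
    | zero => intro _; simp [hV0]
    | succ b ih =>
      intro h
      have h1 : q - 2 - (b + 1) + 1 = q - 2 - b := by omega
      rw [hrec, hzero b (q - 2 - (b + 1)) (by omega), h1, ih (by omega), zero_lie,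
        zero_sub]
      module
  -- sum q-1
  have hsum3 : ∀ b, b ≤ q - 1 →
      ⁅V (q - 1 - b), V b⁆ = ((-1 : F) ^ b) •
        (⁅V (q - 1), Y⁆ - (b : F) • ⁅⁅V (q - 2), Y⁆, X⁆) := by
    intro b
    induction b with
    | zero => intro _; simp [hV0]
    | succ b ih =>
      intro h
      have h1 : q - 1 - (b + 1) = q - 2 - b := by omega
      have h2 : q - 2 - b + 1 = q - 1 - b := by omega
      rw [hrec, h1, h2, hsum2 b (by omega), ih (by omega), smul_lie]
      push_cast
      module
  -- `q` vanishes in `F` and `q` is odd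
  have hm : m ≠ 0 := by rintro rfl; rw [pow_zero] at hq; omega
  have hqF : (q : F) = 0 := by
    rw [hq]
    push_cast
    rw [CharP.cast_eq_zero F p, zero_pow hm]
  have hqodd : Odd q := by
    rw [hq]
    exact (hp.odd_of_ne_two hodd).pow
  -- extract the key relation from hsum3 at b = q-1
  have hVq1 : V (q - 1) = ⁅V (q - 2), X⁆ := by
    rw [show q - 1 = (q - 2) + 1 by omega, hVsucc]
  have hrel : ⁅⁅V (q - 2), Y⁆, X⁆ = -((2 : F) • ⁅⁅V (q - 2), X⁆, Y⁆) := by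
    have heven : Even (q - 1) := Nat.Odd.sub_odd hqodd odd_one
    have hcast : ((q - 1 : ℕ) : F) = -1 := by
      rw [Nat.cast_sub (by omega), hqF, Nat.cast_one, zero_sub]
    have hfin := hsum3 (q - 1) le_rfl
    rw [Nat.sub_self, hV0, heven.neg_one_pow, hcast, one_smul, neg_one_smul, sub_neg_eq_add,
      ← lie_skew Y (V (q - 1))] at hfin
    -- hfin : -⁅V (q-1), Y⁆ = ⁅V (q-1), Y⁆ + ⁅⁅V (q-2), Y⁆, X⁆
    have hA : ⁅⁅V (q - 2), Y⁆, X⁆ = -⁅V (q - 1), Y⁆ - ⁅V (q - 1), Y⁆ := by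
      linear_combination (norm := module) -hfin
    rw [← hVq1, hA, two_smul]
    abel
  -- second claim : [V,Y,Y] = 0
  have hclaim2 : ⁅⁅V (q - 2), Y⁆, Y⁆ = 0 := by
    have hq2 : q - 2 = (q - 3) + 1 := by omega
    have huY : ⁅V (q - 3), Y⁆ = 0 := hVY (q - 3) le_rfl
    have hT : ⁅⁅X, Y⁆, Y⁆ = 0 := hcent 2 le_rfl (by omega) _ (hgr 1 1 X hX Y hY)
    have hW : ⁅V (q - 2), Y⁆ = ⁅V (q - 3), ⁅X, Y⁆⁆ := by
      rw [hq2, hVsucc, lie_lie, huY, lie_zero, sub_zero]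
    rw [hW, lie_lie, hT, lie_zero, huY, lie_zero, sub_zero]
  -- every element of Lc 1 is a combination of X and Y
  have hL1 : ∀ w ∈ Lc 1, ∃ a b : F, a • X + b • Y = w := by
    have hXY : LinearIndependent F ![(⟨X, hX⟩ : Lc 1), ⟨Y, hY⟩] := by
      rw [LinearIndependent.pair_iff]
      intro s t hst
      have hst' : s • X + t • Y = 0 := by
        have := congrArg (Subtype.val) hst
        simpa using this
      have hs : s = 0 := by
        by_contra hs
        apply hXs
        rw [Submodule.mem_span_singleton]
        refine ⟨-t / s, ?_⟩
        have hsX : s • X = -(t • Y) := eq_neg_of_add_eq_zero_left hst'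
        calc (-t / s) • Y = s⁻¹ • ((-t) • Y) := by rw [div_eq_inv_mul, mul_smul]
          _ = s⁻¹ • (s • X) := by rw [neg_smul, ← hsX]
          _ = X := by rw [smul_smul, inv_mul_cancel₀ hs, one_smul]
      refine ⟨hs, ?_⟩
      rw [hs, zero_smul, zero_add] at hst'
      rcases smul_eq_zero.mp hst' with h | h
      · exact h
      · exact absurd h hY0
    have hfd : FiniteDimensional F (Lc 1) :=
      FiniteDimensional.of_finrank_pos (by rw [hdim1]; norm_num)
    have hsp : Submodule.span F (Set.range ![(⟨X, hX⟩ : Lc 1), ⟨Y, hY⟩]) = ⊤ := by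
      apply Submodule.eq_top_of_finrank_eq
      rw [finrank_span_eq_card hXY, hdim1]
      simp
    have hrange : Set.range ![(⟨X, hX⟩ : Lc 1), ⟨Y, hY⟩] =
        ({⟨X, hX⟩, ⟨Y, hY⟩} : Set (Lc 1)) := by
      simp [Matrix.range_cons, Matrix.range_empty]
      exact Set.pair_comm _ _
    rw [hrange] at hsp
    intro w hw
    have hw' : (⟨w, hw⟩ : Lc 1) ∈ Submodule.span F ({⟨X, hX⟩, ⟨Y, hY⟩} : Set (Lc 1)) := by
      rw [hsp]; trivial
    obtain ⟨a, b, hab⟩ := Submodule.mem_span_pair.mp hw'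
    refine ⟨a, b, ?_⟩
    have := congrArg (Subtype.val) hab
    simpa using this
  -- covering reduces to the single bracket with X
  have hcovX : ∀ u : L, ⁅u, Y⁆ = 0 →
      Submodule.span F {z | ∃ w ∈ Lc 1, z = ⁅u, w⁆} = Submodule.span F {⁅u, X⁆} := by
    intro u hu
    apply le_antisymm
    · rw [Submodule.span_le]
      rintro z ⟨w, hw, rfl⟩
      obtain ⟨a, b, rfl⟩ := hL1 w hw
      rw [lie_add, lie_smul, lie_smul, hu, smul_zero, add_zero]
      exact Submodule.smul_mem _ a (Submodule.subset_span rfl)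
    · rw [Submodule.span_le, Set.singleton_subset_iff]
      exact Submodule.subset_span ⟨X, hX, rfl⟩
  -- the span claim by induction
  have hspan : ∀ k, 1 ≤ k → k ≤ q - 2 → Submodule.span F {V k} = Lc (k + 1) := by
    intro k hk1
    induction k, hk1 using Nat.le_induction with
    | base =>
      intro _
      have hc := hcov 1 le_rfl Y hY hY0
      rw [hcovX Y (lie_self Y)] at hc
      rw [show V 1 = ⁅Y, X⁆ by rw [hVsucc 0, hV0]]
      exact hc
    | succ k hk ih =>
      intro hk2
      have hsp := ih (by omega)
      have hne : V k ≠ 0 := by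
        intro h0'
        have hbot : Lc (k + 1) = ⊥ := by
          rw [← hsp, h0', Submodule.span_zero_singleton]
        have hd := hdim (k + 1) (by omega) (by omega)
        rw [hbot, finrank_bot] at hd
        omega
      have hc := hcov (k + 1) (by omega) (V k) (hVmem k) hne
      rw [hcovX (V k) (hVY k (by omega)), ← hVsucc k] at hc
      exact hc
  refine ⟨?_, hclaim2, hrel⟩
  have := hspan (q - 2) (by omega) le_rfl
  rwa [show q - 2 + 1 = q - 1 by omega] at this
end

section
/- Let F be a field of odd characteristic p and let q > 3 be a power of p. Let L = ⊕_{i≥1} L_i be a graded Lie algebra over F satisfying the covering property, with dim L_1 = 2, dim L_i = 1 for 2 ≤ i ≤ q−1, dim L_q = 2 and L_{q+1} ≠ 0, and let Y be a nonzero element of L_1 such that [u, Y] = 0 for every u ∈ L_i with 2 ≤ i ≤ q−2. For X ∈ L_1 write V(X) := [Y, X, …, X] (left-normed, with q−2 copies of X). Then for every X ∈ L_1 not proportional to Y one has [V(X),X,Y] ≠ 0; moreover there exists X ∈ L_1, not proportional to Y, with [V(X),X,X] = 0, and any two such elements are proportional. -/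
/-- with a diamond in degree `q` and `L_{q+1} ≠ 0`, writing
`V(X) = [Y,X,…,X]` (with `q-2` copies of `X`): `[V(X),X,Y] ≠ 0` for every `X ∈ L_1` not
proportional to `Y`; there exists such an `X` with `[V(X),X,X] = 0`, and any two such
elements are proportional. -/
theorem stmt13 (p : ℕ) (hp : p.Prime) (hodd : p ≠ 2)
    (F : Type*) [Field F] [CharP F p]
    (m : ℕ) (q : ℕ) (hq : q = p ^ m) (hq3 : 3 < q)
    (L : Type*) [LieRing L] [LieAlgebra F L]
    (Lc : ℕ → Submodule F L)
    -- `L = ⊕_{i ≥ 1} L_i` is a graded Lie algebra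
    (hinternal : DirectSum.IsInternal Lc) (h0 : Lc 0 = ⊥)
    (hgr : ∀ i j : ℕ, ∀ x ∈ Lc i, ∀ y ∈ Lc j, ⁅x, y⁆ ∈ Lc (i + j))
    -- the covering property
    (hcov : ∀ i : ℕ, 1 ≤ i → ∀ u ∈ Lc i, u ≠ 0 →
      Submodule.span F {z | ∃ w ∈ Lc 1, z = ⁅u, w⁆} = Lc (i + 1))
    -- `dim L_1 = 2`, `dim L_i = 1` for `2 ≤ i ≤ q-1`, `dim L_q = 2`, `L_{q+1} ≠ 0`
    (hdim1 : Module.finrank F (Lc 1) = 2)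
    (hdim : ∀ i : ℕ, 2 ≤ i → i ≤ q - 1 → Module.finrank F (Lc i) = 1)
    (hdimq : Module.finrank F (Lc q) = 2)
    (hq1 : Lc (q + 1) ≠ ⊥)
    -- `Y` is a nonzero element of `L_1` centralizing `L_i` for `2 ≤ i ≤ q-2`
    (Y : L) (hY : Y ∈ Lc 1) (hY0 : Y ≠ 0)
    (hcent : ∀ i : ℕ, 2 ≤ i → i ≤ q - 2 → ∀ u ∈ Lc i, ⁅u, Y⁆ = 0) :
    (∀ X ∈ Lc 1, X ∉ Submodule.span F {Y} →
      ⁅⁅(fun z => ⁅z, X⁆)^[q - 2] Y, X⁆, Y⁆ ≠ 0) ∧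
    (∃ X ∈ Lc 1, X ∉ Submodule.span F {Y} ∧
      ⁅⁅(fun z => ⁅z, X⁆)^[q - 2] Y, X⁆, X⁆ = 0) ∧
    (∀ X ∈ Lc 1, ∀ X' ∈ Lc 1,
      X ∉ Submodule.span F {Y} → ⁅⁅(fun z => ⁅z, X⁆)^[q - 2] Y, X⁆, X⁆ = 0 →
      X' ∉ Submodule.span F {Y} → ⁅⁅(fun z => ⁅z, X'⁆)^[q - 2] Y, X'⁆, X'⁆ = 0 →
      ∃ cst : F, X' = cst • X) := by
  classical
  -- numeric facts
  have hq4 : 4 ≤ q := by omega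
  have hm : m ≠ 0 := by rintro rfl; rw [pow_zero] at hq; omega
  have hpF : (p : F) = 0 := CharP.cast_eq_zero F p
  have hqF : (q : F) = 0 := by rw [hq]; push_cast; rw [hpF, zero_pow hm]
  have h2F : (2 : F) ≠ 0 := by
    intro h
    have h2 : ((2 : ℕ) : F) = 0 := by exact_mod_cast h
    have := (CharP.cast_eq_zero_iff F p 2).mp h2
    exact hodd ((Nat.prime_dvd_prime_iff_eq hp Nat.prime_two).mp this)
  have hqodd : Odd q := hq ▸ (hp.odd_of_ne_two hodd).pow
  -- choose X₀ ∈ L₁ outside span {Y}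
  obtain ⟨X₀, hX₀mem, hX₀ns⟩ : ∃ x ∈ Lc 1, x ∉ Submodule.span F {Y} := by
    by_contra h
    push_neg at h
    have hle : Lc 1 ≤ Submodule.span F {Y} := h
    have h1 : Module.finrank F (Lc 1) ≤ Module.finrank F (Submodule.span F {Y}) :=
      Submodule.finrank_mono hle
    rw [hdim1, finrank_span_singleton hY0] at h1
    omega
  -- L₁ = span {X₀, Y}
  have hfd1 : FiniteDimensional F (Lc 1) :=
    Module.finite_of_finrank_pos (by rw [hdim1]; norm_num)
  have hli : LinearIndependent F ![X₀, Y] := by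
    rw [linearIndependent_fin2]
    refine ⟨by simpa using hY0, fun a ha => ?_⟩
    apply hX₀ns
    simp only [Matrix.cons_val_one, Matrix.head_cons, Matrix.cons_val_zero] at ha
    rw [← ha]
    exact Submodule.smul_mem _ a (Submodule.mem_span_singleton_self Y)
  have hL1 : Lc 1 = Submodule.span F {X₀, Y} := by
    have hle : Submodule.span F {X₀, Y} ≤ Lc 1 := by
      rw [Submodule.span_le]
      intro z hz
      rcases Set.mem_insert_iff.mp hz with rfl | hz2
      · exact hX₀mem
      · rw [Set.mem_singleton_iff] at hz2; subst hz2; exact hY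
    have hrank : Module.finrank F (Lc 1) ≤ Module.finrank F (Submodule.span F {X₀, Y}) := by
      have := finrank_span_eq_card (R := F) hli
      have hr : Set.range ![X₀, Y] = {X₀, Y} := by
        ext z; simp [Fin.exists_fin_two]; tauto
      rw [hr] at this
      rw [this, hdim1]
      simp
    exact (Submodule.eq_of_le_of_finrank_le hle hrank).symm
  -- covering property rephrased
  have span_pair_zero : ∀ x : L, Submodule.span F {x, (0:L)} = Submodule.span F {x} := by
    intro x
    rw [show ({x, (0:L)} : Set L) = insert x {0} from rfl, Submodule.span_insert,
      Submodule.span_zero_singleton, sup_bot_eq]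
  have hcovpair : ∀ i u, 1 ≤ i → u ∈ Lc i → u ≠ 0 →
      Lc (i+1) = Submodule.span F {⁅u, X₀⁆, ⁅u, Y⁆} := by
    intro i u h1 hu hne
    rw [← hcov i h1 u hu hne]
    apply le_antisymm
    · rw [Submodule.span_le]
      rintro z ⟨w', hw', rfl⟩
      rw [hL1] at hw'
      obtain ⟨c, d, rfl⟩ := Submodule.mem_span_pair.mp hw'
      have hx : ⁅u, X₀⁆ ∈ Submodule.span F {⁅u, X₀⁆, ⁅u, Y⁆} :=
        Submodule.subset_span (Set.mem_insert _ _)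
      have hy : ⁅u, Y⁆ ∈ Submodule.span F {⁅u, X₀⁆, ⁅u, Y⁆} :=
        Submodule.subset_span (Set.mem_insert_iff.mpr (Or.inr rfl))
      simpa [lie_add, lie_smul] using
        add_mem (Submodule.smul_mem _ c hx) (Submodule.smul_mem _ d hy)
    · rw [Submodule.span_le]
      intro z hz
      rcases Set.mem_insert_iff.mp hz with rfl | hz2
      · exact Submodule.subset_span ⟨X₀, hX₀mem, rfl⟩
      · rw [Set.mem_singleton_iff] at hz2; subst hz2
        exact Submodule.subset_span ⟨Y, hY, rfl⟩
  -- the chain v k = ad(X₀)^k Y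
  set v : ℕ → L := fun k => (fun z => ⁅z, X₀⁆)^[k] Y with hv_def
  have hv0 : v 0 = Y := rfl
  have hvsucc : ∀ k, v (k+1) = ⁅v k, X₀⁆ := by
    intro k; rw [hv_def]; exact Function.iterate_succ_apply' _ k Y
  have hvmem : ∀ k, v k ∈ Lc (k+1) := by
    intro k; induction k with
    | zero => exact hY
    | succ n ih =>
      rw [hvsucc]
      exact hgr (n+1) 1 _ ih _ hX₀mem
  have hvY : ∀ k, k ≤ q - 3 → ⁅v k, Y⁆ = 0 := by
    intro k hk
    rcases Nat.eq_zero_or_pos k with rfl | hk1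
    · rw [hv0]; exact lie_self Y
    · exact hcent (k+1) (by omega) (by omega) _ (hvmem k)
  -- spanning
  have hne_of : ∀ k (x : L), 2 ≤ k → k ≤ q - 1 → Lc k = Submodule.span F {x} → x ≠ 0 := by
    intro k x h2 h3 hsp hx0
    rw [hx0, Submodule.span_zero_singleton] at hsp
    have := hdim k h2 h3
    rw [hsp] at this
    simp [finrank_bot] at this
  have hspan : ∀ k, 1 ≤ k → k ≤ q - 2 → Lc (k+1) = Submodule.span F {v k} := by
    intro k hk1
    induction k, hk1 using Nat.le_induction with
    | base =>
      intro _
      have h := hcovpair 1 Y le_rfl hY hY0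
      rw [lie_self, span_pair_zero] at h
      rw [h, hvsucc 0, hv0]
    | succ n hn ih =>
      intro h
      have hsp := ih (by omega)
      have hne : v n ≠ 0 := hne_of (n+1) (v n) (by omega) (by omega) hsp
      have h2 := hcovpair (n+1) (v n) (by omega) (hvmem n) hne
      rw [hvY n (by omega), span_pair_zero] at h2
      rw [h2, hvsucc]
  have hVne : v (q-2) ≠ 0 := by
    have h1 := hspan (q-2) (by omega) le_rfl
    rw [show q - 2 + 1 = q - 1 from by omega] at h1
    exact hne_of (q-1) _ (by omega) le_rfl h1
  have hVmem : v (q-2) ∈ Lc (q-1) := by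
    have := hvmem (q-2); rwa [show q-2+1 = q-1 from by omega] at this
  set w : L := ⁅v (q-2), Y⁆ with hw_def
  have hwmem : w ∈ Lc q := by
    have := hgr (q-1) 1 _ hVmem Y hY
    rwa [show q-1+1 = q from by omega, ← hw_def] at this
  have hwne : w ≠ 0 := by
    intro h0
    have hpair := hcovpair (q-1) (v (q-2)) (by omega) hVmem hVne
    rw [show q-1+1 = q from by omega, ← hw_def, h0, span_pair_zero] at hpair
    have hd := hdimq
    rw [hpair] at hd
    by_cases hc : ⁅v (q-2), X₀⁆ = 0
    · rw [hc, Submodule.span_zero_singleton] at hd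
      simp [finrank_bot] at hd
    · rw [finrank_span_singleton hc] at hd
      omega
  -- vanishing brackets in low degrees
  have hvv0 : ∀ b a, 1 ≤ a → 1 ≤ b → a + b ≤ q - 3 → ⁅v a, v b⁆ = 0 := by
    intro b
    induction b with
    | zero => intro a _ h _; omega
    | succ n ih =>
      intro a ha hb hab
      rcases Nat.eq_zero_or_pos n with rfl | hn
      · rw [show (0:ℕ)+1 = 1 from rfl, hvsucc 0, hv0, leibniz_lie, hvY a (by omega),
          zero_lie, zero_add, ← hvsucc a, ← lie_skew, hvY (a+1) (by omega), neg_zero]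
      · rw [hvsucc n, leibniz_lie, ih a ha hn (by omega), zero_lie, zero_add,
          ← hvsucc a, ← lie_skew, ih (a+1) (by omega) hn (by omega), neg_zero]
  -- w = -⁅v (q-3), v 1⁆
  have exY : ⁅X₀, Y⁆ = -(v 1) := by
    rw [hvsucc 0, hv0]
    exact (lie_skew X₀ Y).symm
  have hw1 : w = -⁅v (q-3), v 1⁆ := by
    have e1 : ⁅v (q-3), ⁅X₀, Y⁆⁆ = ⁅⁅v (q-3), X₀⁆, Y⁆ + ⁅X₀, ⁅v (q-3), Y⁆⁆ :=
      leibniz_lie _ _ _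
    rw [hvY (q-3) (by omega), lie_zero, add_zero, exY, lie_neg, ← hvsucc,
      show q-3+1 = q-2 from by omega, ← hw_def] at e1
    rw [← e1]
  have hwY : ⁅w, Y⁆ = 0 := by
    have e1 : ⁅v (q-3), ⁅v 1, Y⁆⁆ = ⁅⁅v (q-3), v 1⁆, Y⁆ + ⁅v 1, ⁅v (q-3), Y⁆⁆ :=
      leibniz_lie _ _ _
    rw [hvY 1 (by omega), hvY (q-3) (by omega), lie_zero, lie_zero, add_zero] at e1
    rw [hw1, neg_lie, ← e1, neg_zero]
  -- degree-q family
  have hU : ∀ j, 2 ≤ j → j ≤ q - 2 → ⁅v (q - j - 1), v (j - 1)⁆ = ((-1:F)^(j-1)) • w := by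
    intro j hj2
    induction j, hj2 using Nat.le_induction with
    | base =>
      intro _
      rw [show q - 2 - 1 = q - 3 from by omega, show (2:ℕ) - 1 = 1 from rfl]
      rw [pow_one, neg_smul, one_smul, hw1, neg_neg]
    | succ j hj ih =>
      intro hle
      obtain ⟨i, rfl⟩ : ∃ i, j = i + 1 := ⟨j - 1, by omega⟩
      rw [show (i + 1 + 1) - 1 = i + 1 from by omega, hvsucc i, leibniz_lie,
        hvv0 i (q - (i+1+1) - 1) (by omega) (by omega) (by omega), zero_lie, zero_add,
        ← hvsucc, ← lie_skew, show q - (i+1+1) - 1 + 1 = q - (i+1) - 1 from by omega]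
      have hih := ih (by omega)
      rw [show (i+1) - 1 = i from by omega] at hih
      rw [hih]
      module
  -- degree-(q+1) family
  have hT : ∀ j, 2 ≤ j → j ≤ q - 1 →
      ⁅v (q - j), v (j - 1)⁆ =
        ((-1:F)^j) • (⁅v (q-2), v 1⁆ - ((2:F) - (j:F)) • ⁅w, X₀⁆) := by
    intro j hj2
    induction j, hj2 using Nat.le_induction with
    | base =>
      intro _
      rw [show (2:ℕ) - 1 = 1 from rfl]
      norm_num
    | succ j hj ih =>
      intro hle
      obtain ⟨i, rfl⟩ : ∃ i, j = i + 2 := ⟨j - 2, by omega⟩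
      rw [show (i + 2 + 1) - 1 = i + 2 from by omega, hvsucc (i+1), leibniz_lie]
      have hu := hU (i+2) (by omega) (by omega)
      rw [show (i+2) - 1 = i + 1 from by omega] at hu
      rw [show q - (i+2+1) = q - (i+2) - 1 from by omega, hu, smul_lie,
        ← hvsucc, show q - (i+2) - 1 + 1 = q - (i+2) from by omega,
        show ⁅v (i+1), v (q - (i+2))⁆ = -⁅v (q - (i+2)), v (i+1)⁆ from
          (lie_skew _ _).symm]
      have hih := ih (by omega)
      rw [show (i+2) - 1 = i + 1 from by omega] at hih
      rw [hih]
      push_cast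
      match_scalars <;> ring
  -- the key scalar relation 2 t₂ = 3 C
  have hT2 := hT (q-1) (by omega) le_rfl
  rw [show q - (q-1) = 1 from by omega, show q - 1 - 1 = q - 2 from by omega] at hT2
  have heven : Even (q-1) := Nat.Odd.sub_odd hqodd odd_one
  have hc1 : ((q-1:ℕ):F) = -1 := by
    rw [Nat.cast_sub (by omega), hqF]; ring
  rw [hc1, Even.neg_one_pow heven, one_smul, (lie_skew (v 1) (v (q-2))).symm] at hT2
  have ht2C : (2:F) • ⁅v (q-2), v 1⁆ = (3:F) • ⁅w, X₀⁆ := by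
    linear_combination (norm := module) -hT2
  -- B = ⁅v (q-1), Y⁆ and C = -2B
  have e1 : ⁅v (q-2), ⁅X₀, Y⁆⁆ = ⁅⁅v (q-2), X₀⁆, Y⁆ + ⁅X₀, ⁅v (q-2), Y⁆⁆ :=
    leibniz_lie _ _ _
  rw [exY, lie_neg, ← hvsucc, show q-2+1 = q-1 from by omega, ← hw_def,
    (lie_skew X₀ w).symm] at e1
  -- e1 : -⁅v (q-2), v 1⁆ = ⁅v (q-1), Y⁆ + -⁅w, X₀⁆
  have hwX : ⁅w, X₀⁆ = (-2:F) • ⁅v (q-1), Y⁆ := by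
    linear_combination (norm := module) (-2:F) • e1 - ht2C
  -- L_{q+1} = span {⁅w, X₀⁆}
  have hLq1 : Lc (q+1) = Submodule.span F {⁅w, X₀⁆} := by
    have h := hcovpair q w (by omega) hwmem hwne
    rw [hwY, span_pair_zero] at h
    exact h
  have hBne : ⁅v (q-1), Y⁆ ≠ 0 := by
    intro h0
    apply hq1
    rw [hLq1, hwX, h0, smul_zero, Submodule.span_zero_singleton]
  -- v q = lam • B
  obtain ⟨lam, hlam⟩ : ∃ lam : F, v q = lam • ⁅v (q-1), Y⁆ := by
    have hm : v q ∈ Lc (q+1) := hvmem q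
    rw [hLq1, Submodule.mem_span_singleton] at hm
    obtain ⟨μ, hμ⟩ := hm
    refine ⟨μ * (-2), ?_⟩
    rw [← hμ, hwX]
    module
  have hvqX : ⁅v (q-1), X₀⁆ = lam • ⁅v (q-1), Y⁆ := by
    rw [← hvsucc, show q-1+1 = q from by omega, hlam]
  -- iterate formula
  have hiter : ∀ (a b : F), ∀ k, k ≤ q - 2 →
      (fun z => ⁅z, a • X₀ + b • Y⁆)^[k] Y = a^k • v k := by
    intro a b k
    induction k with
    | zero => intro _; simp [hv0]
    | succ n ih =>
      intro h
      rw [Function.iterate_succ_apply', ih (by omega), smul_lie, lie_add, lie_smul,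
        lie_smul, hvY n (by omega), ← hvsucc, smul_zero, add_zero, smul_smul, pow_succ]
  -- main computation
  have hmain : ∀ (a b : F),
      ⁅⁅(fun z => ⁅z, a • X₀ + b • Y⁆)^[q-2] Y, a • X₀ + b • Y⁆, Y⁆
        = (a^(q-2) * a) • ⁅v (q-1), Y⁆ ∧
      ⁅⁅(fun z => ⁅z, a • X₀ + b • Y⁆)^[q-2] Y, a • X₀ + b • Y⁆, a • X₀ + b • Y⁆
        = (a^(q-2) * a * (a * lam - b)) • ⁅v (q-1), Y⁆ := by
    intro a b
    rw [hiter a b (q-2) le_rfl]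
    have ebr : ⁅a^(q-2) • v (q-2), a • X₀ + b • Y⁆
        = (a^(q-2) * a) • v (q-1) + (a^(q-2) * b) • w := by
      rw [smul_lie, lie_add, lie_smul, lie_smul, ← hvsucc, show q-2+1 = q-1 from by omega,
        ← hw_def]
      module
    rw [ebr]
    constructor
    · rw [add_lie, smul_lie, smul_lie, hwY, smul_zero, add_zero]
    · rw [add_lie, smul_lie, smul_lie, lie_add, lie_add, lie_smul, lie_smul, lie_smul,
        lie_smul, hvqX, hwX, hwY, smul_zero, add_zero]
      match_scalars <;> ring
  -- decomposition helper
  have hdecomp : ∀ X ∈ Lc 1, X ∉ Submodule.span F {Y} →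
      ∃ a b : F, a ≠ 0 ∧ a • X₀ + b • Y = X := by
    intro X hX hXns
    rw [hL1] at hX
    obtain ⟨a, b, hab⟩ := Submodule.mem_span_pair.mp hX
    refine ⟨a, b, ?_, hab⟩
    rintro rfl
    apply hXns
    rw [← hab, zero_smul, zero_add]
    exact Submodule.smul_mem _ b (Submodule.mem_span_singleton_self Y)
  refine ⟨?_, ?_, ?_⟩
  · -- first claim
    intro X hX hXns
    obtain ⟨a, b, ha, hab⟩ := hdecomp X hX hXns
    rw [← hab, (hmain a b).1]
    exact smul_ne_zero (mul_ne_zero (pow_ne_zero _ ha) ha) hBne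
  · -- existence
    refine ⟨X₀ + lam • Y, add_mem hX₀mem (Submodule.smul_mem _ _ hY), ?_, ?_⟩
    · intro hmem
      apply hX₀ns
      have := sub_mem hmem (Submodule.smul_mem _ lam (Submodule.mem_span_singleton_self Y))
      simpa using this
    · have h := (hmain 1 lam).2
      rw [one_smul] at h
      rw [h]
      norm_num
  · -- uniqueness
    intro X hX X' hX' hXns h2 hX'ns h2'
    obtain ⟨a, b, ha, hab⟩ := hdecomp X hX hXns
    obtain ⟨a', b', ha', hab'⟩ := hdecomp X' hX' hX'ns
    rw [← hab, (hmain a b).2] at h2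
    rw [← hab', (hmain a' b').2] at h2'
    have hb : b = a * lam := by
      rcases smul_eq_zero.mp h2 with hc | hc
      · rcases mul_eq_zero.mp hc with hc2 | hc2
        · exact absurd hc2 (mul_ne_zero (pow_ne_zero _ ha) ha)
        · exact (sub_eq_zero.mp hc2).symm
      · exact absurd hc hBne
    have hb' : b' = a' * lam := by
      rcases smul_eq_zero.mp h2' with hc | hc
      · rcases mul_eq_zero.mp hc with hc2 | hc2
        · exact absurd hc2 (mul_ne_zero (pow_ne_zero _ ha') ha')
        · exact (sub_eq_zero.mp hc2).symm
      · exact absurd hc hBne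
    refine ⟨a' * a⁻¹, ?_⟩
    rw [← hab, ← hab', hb, hb']
    match_scalars <;> field_simp <;> ring
end

section
/- Let K be a field of characteristic p > 0 and let σ ∈ K with σ ≠ 0. In the formal power series ring K[[ε]], let ρ0 be the power series whose coefficient of ε^n equals −σ^(1−p·n) (i.e. −σ·(σ^(−p))^n) if n = p^i for some integer i ≥ 0, and equals 0 otherwise; equivalently, ρ0 = −σ·Σ_{i≥0} (ε/σ^p)^(p^i). Then ρ0 satisfies ρ0^p − σ^(p−1)·ρ0 − ε = 0, i.e. ρ0 is a root of the polynomial Z^p − σ^(p−1)·Z − ε over K[[ε]]. -/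
/-!
Write `ρ0 = -σ·g(ε/σ^p)` with `g = Σ_{i≥0} X^(p^i)`. In characteristic `p`, raising a series with
coefficients in `𝔽_p` to the `p`-th power just substitutes `X^p` for `X`, so
`g^p = Σ_{i≥1} X^(p^i) = g - X`. Rescaling `X ↦ ε/σ^p` and multiplying by `(-σ)^p = -σ^p` turns
this Artin–Schreier equation into `ρ0^p = σ^(p-1)·ρ0 + ε`.
-/

open Classical in
/-- The power series `ρ0 = -σ·Σ_{i≥0} (ε/σ^p)^(p^i)`, whose coefficient of `ε^n` is
`-σ·(σ^(-p))^n` if `n = p^i` for some `i ≥ 0` and `0` otherwise. -/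
noncomputable def rho0 (p : ℕ) (K : Type*) [Field K] (σ : K) : PowerSeries K :=
  PowerSeries.mk fun n => if ∃ i : ℕ, n = p ^ i then -(σ * ((σ ^ p)⁻¹) ^ n) else 0

theorem Nat.exists_div_eq_pow_iff_of_dvd {p n : ℕ} (hp : 1 < p) (hn : p ∣ n) :
    (∃ i, n / p = p ^ i) ↔ ∃ i, n = p ^ i := by
  obtain ⟨m, rfl⟩ := hn
  rw [Nat.mul_div_cancel_left m (by omega)]
  constructor
  · rintro ⟨i, rfl⟩
    exact ⟨i + 1, (Nat.pow_succ' ..).symm⟩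
  · rintro ⟨_ | i, hi⟩
    · exact absurd (Nat.eq_one_of_mul_eq_one_right hi) hp.ne'
    · exact ⟨i, Nat.eq_of_mul_eq_mul_left (by omega) (hi.trans Nat.pow_succ')⟩

theorem Nat.exists_eq_pow_iff_of_not_dvd {p n : ℕ} (hn : ¬p ∣ n) :
    (∃ i, n = p ^ i) ↔ n = 1 := by
  constructor
  · rintro ⟨_ | i, rfl⟩
    · rfl
    · exact absurd (dvd_pow_self p i.succ_ne_zero) hn
  · rintro rfl
    exact ⟨0, rfl⟩

namespace PowerSeries

variable {R : Type*} [CommRing R]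

theorem pow_char_eq_expand_of_map_frobenius_eq (p : ℕ) (hp : p ≠ 0) [ExpChar R p]
    (f : PowerSeries R) (hf : map (frobenius R p) f = f) : f ^ p = expand p hp f := by
  rw [← MvPowerSeries.map_frobenius_expand p hp]
  exact (map_expand p hp _ f).trans (congrArg _ hf)

open Classical in
noncomputable def artinSchreierSeries (p : ℕ) (R : Type*) [Semiring R] : PowerSeries R :=
  mk fun n => if ∃ i : ℕ, n = p ^ i then 1 else 0

theorem artinSchreierSeries_pow {p : ℕ} (hp : p.Prime) [CharP R p] :
    artinSchreierSeries p R ^ p = artinSchreierSeries p R - X := by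
  classical
  have : ExpChar R p := ExpChar.prime hp
  have hfrob : map (frobenius R p) (artinSchreierSeries p R) = artinSchreierSeries p R := by
    ext n
    simp only [artinSchreierSeries, coeff_map, coeff_mk]
    split_ifs <;> simp
  rw [pow_char_eq_expand_of_map_frobenius_eq p hp.ne_zero _ hfrob]
  ext n
  simp only [coeff_expand, artinSchreierSeries, coeff_mk, map_sub, coeff_X]
  by_cases hn : p ∣ n
  · have hn1 : n ≠ 1 := fun h => hp.one_lt.ne' (Nat.dvd_one.mp (h ▸ hn))
    rw [if_pos hn, if_neg hn1, sub_zero]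
    exact if_congr (Nat.exists_div_eq_pow_iff_of_dvd hp.one_lt hn) rfl rfl
  · simp only [if_neg hn, Nat.exists_eq_pow_iff_of_not_dvd hn, sub_self]

end PowerSeries

open PowerSeries in
theorem rho0_eq_neg_C_mul_rescale_artinSchreierSeries (p : ℕ) (K : Type*) [Field K] (σ : K) :
    rho0 p K σ = -(C σ * rescale (σ ^ p)⁻¹ (artinSchreierSeries p K)) := by
  ext n
  simp only [rho0, artinSchreierSeries, coeff_mk, map_neg, coeff_C_mul, coeff_rescale]
  split_ifs <;> simp

/-- `ρ0` is a root of `Z^p - σ^(p-1)·Z - ε` over `K[[ε]]`. -/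
theorem stmt17 (p : ℕ) (hp : p.Prime) (K : Type*) [Field K] [CharP K p]
    (σ : K) (hσ : σ ≠ 0) :
    rho0 p K σ ^ p - (PowerSeries.C σ) ^ (p - 1) * rho0 p K σ - PowerSeries.X = 0 := by
  let C := PowerSeries.C (R := K)
  let g := PowerSeries.rescale (σ ^ p)⁻¹ (PowerSeries.artinSchreierSeries p K)
  have : Fact p.Prime := ⟨hp⟩
  have : CharP (PowerSeries K) p := charP_of_injective_ringHom PowerSeries.C_injective p
  have hσp : C σ ^ (p - 1) * C σ = C (σ ^ p) := by
    rw [← pow_succ, Nat.sub_add_cancel hp.one_le, map_pow]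
  have hinv : C (σ ^ p) * C (σ ^ p)⁻¹ = 1 := by
    rw [← map_mul, mul_inv_cancel₀ (pow_ne_zero p hσ), map_one]
  rw [rho0_eq_neg_C_mul_rescale_artinSchreierSeries, neg_pow, neg_one_pow_char, mul_pow,
    ← map_pow C, ← map_pow (PowerSeries.rescale _), PowerSeries.artinSchreierSeries_pow hp,
    map_sub, PowerSeries.rescale_X]
  linear_combination g * hσp + PowerSeries.X * hinv
end
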